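/- arXiv:2309.02602 — 3 statements merged into one kernel-verified Lean document; each statement's English description precedes it below -/
import Mathlib

section
/- Let $\mathfrak{g}$ be a Lie algebra with a bilinear skew-symmetric map $\Sigma : \mathfrak{g}\times\mathfrak{g}\to\mathbb{R}$ defined on $\mathfrak{g} = \mathfrak{X} \ltimes (\Lambda^0 \oplus \Lambda^0 \oplus \Lambda^2)$ by $\Sigma((X_1,f_1,g_1,\omega_1),(X_2,f_2,g_2,\omega_2)) = s\langle g_1,\omega_2\rangle - s\langle g_2,\omega_1\rangle$ for a fixed constant $s$. Then $\Sigma$ is a Lie algebra 2-cocycle; i.e., $\Sigma(\xi,[\eta,\zeta]) + \Sigma(\eta,[\zeta,\xi]) + \Sigma(\zeta,[\xi,\eta]) = 0$ for all $\xi,\eta,\zeta \in \mathfrak{g}$. -/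
/-- The bilinear skew-symmetric form
`Σ((X₁,f₁,g₁,ω₁),(X₂,f₂,g₂,ω₂)) = s⟨g₁,ω₂⟩ - s⟨g₂,ω₁⟩`
on the semidirect-product Lie algebra `𝔛(M) ⋉ (𝓕(M) ⊕ 𝓕(M) ⊕ Den(M))`
is a Lie algebra 2-cocycle.  Here `lieF X`, `lieD X` are the Lie-derivative
actions of a vector field `X` on functions and densities, `pair` is the
natural pairing `⟨g,ω⟩ = ∫ g ω` satisfying integration by parts
`⟨X(g),ω⟩ + ⟨g,X(ω)⟩ = 0`, and the Lie bracket is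
`[(X,f,g,ω),(X̃,f̃,g̃,ω̃)] = ([X,X̃], X(f̃)-X̃(f), X(g̃)-X̃(g), X(ω̃)-X̃(ω))`. -/
theorem sigma_is_two_cocycle
    (𝔛 F Den : Type*) [AddCommGroup F] [Module ℝ F]
    [AddCommGroup Den] [Module ℝ Den]
    (lieF : 𝔛 → F →ₗ[ℝ] F) (lieD : 𝔛 → Den →ₗ[ℝ] Den)
    (pair : F →ₗ[ℝ] Den →ₗ[ℝ] ℝ)
    (hibp : ∀ (X : 𝔛) (g : F) (ω : Den), pair (lieF X g) ω + pair g (lieD X ω) = 0)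
    (s : ℝ)
    (Sig : (𝔛 × F × F × Den) → (𝔛 × F × F × Den) → ℝ)
    (hSig : ∀ ξ η, Sig ξ η = s * pair ξ.2.2.1 η.2.2.2 - s * pair η.2.2.1 ξ.2.2.2)
    (braX : 𝔛 → 𝔛 → 𝔛)
    (bra : (𝔛 × F × F × Den) → (𝔛 × F × F × Den) → (𝔛 × F × F × Den))
    (hbra : ∀ ξ η, bra ξ η =
      (braX ξ.1 η.1,
       lieF ξ.1 η.2.1 - lieF η.1 ξ.2.1,
       lieF ξ.1 η.2.2.1 - lieF η.1 ξ.2.2.1,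
       lieD ξ.1 η.2.2.2 - lieD η.1 ξ.2.2.2)) :
    ∀ ξ η ζ, Sig ξ (bra η ζ) + Sig η (bra ζ ξ) + Sig ζ (bra ξ η) = 0 := by
  rintro ⟨X, f, g, ω⟩ ⟨X', f', g', ω'⟩ ⟨X'', f'', g'', ω''⟩
  simp only [hSig, hbra, map_sub, LinearMap.sub_apply]
  have h1 := hibp X' g ω''
  have h2 := hibp X'' g ω'
  have h3 := hibp X'' g' ω
  have h4 := hibp X g' ω''
  have h5 := hibp X g'' ω'
  have h6 := hibp X' g'' ω
  linear_combination s*(h1 - h2 + h3 - h4 + h5 - h6)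
end

section
/- Given the linear system $\tilde\omega^2 a_1 - if\tilde\omega a_T - ib k_1 - a_j P_{1j} = 0$, $\tilde\omega^2 a_2 - ib k_2 - a_j P_{2j} = 0$, $\tilde\omega^2 a_T + if\tilde\omega a_1 = 0$, and $k_1 a_1 + k_2 a_2 = 0$ (summation over $j\in\{1,2\}$, $P$ a symmetric real $2\times 2$ matrix, $\tilde\omega \neq 0$, $\mathbf{k}=(k_1,k_2)\neq 0$), if $(a_1,a_2,a_T,b)$ is a nontrivial solution with $(a_1,a_2)\neq(0,0)$, then the doppler-shifted frequency satisfies the dispersion relation $\tilde\omega^2 = \frac{f^2 k_2^2}{|\mathbf{k}|^2} + \left(\delta_{ij} - \frac{k_i k_j}{|\mathbf{k}|^2}\right)P_{ij}$. -/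
open Complex

/-- Dispersion relation for internal gravity waves in the vertical slice:
given the linear system for wave amplitudes `(a₁, a₂, a_T, b)` with
symmetric pressure Hessian `P`, nonzero Doppler-shifted frequency `ω̃`, and
nonzero wave vector `k`, any nontrivial solution with `(a₁,a₂) ≠ (0,0)`
forces `ω̃² = f²k₂²/|k|² + (δᵢⱼ - kᵢkⱼ/|k|²) Pᵢⱼ`. -/
theorem slice_WCI_dispersion_relation
    (f ω : ℝ) (hω : ω ≠ 0)
    (k₁ k₂ : ℝ) (hk : ¬(k₁ = 0 ∧ k₂ = 0))
    (P : Matrix (Fin 2) (Fin 2) ℝ) (hP : P 0 1 = P 1 0)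
    (a₁ a₂ aT b : ℂ)
    (e₁ : (ω : ℂ) ^ 2 * a₁ - I * (f : ℂ) * (ω : ℂ) * aT - I * b * (k₁ : ℂ)
        - (a₁ * (P 0 0 : ℝ) + a₂ * (P 0 1 : ℝ)) = 0)
    (e₂ : (ω : ℂ) ^ 2 * a₂ - I * b * (k₂ : ℂ)
        - (a₁ * (P 1 0 : ℝ) + a₂ * (P 1 1 : ℝ)) = 0)
    (e₃ : (ω : ℂ) ^ 2 * aT + I * (f : ℂ) * (ω : ℂ) * a₁ = 0)
    (e₄ : (k₁ : ℂ) * a₁ + (k₂ : ℂ) * a₂ = 0)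
    (hnz : ¬(a₁ = 0 ∧ a₂ = 0)) :
    ω ^ 2 = f ^ 2 * k₂ ^ 2 / (k₁ ^ 2 + k₂ ^ 2)
      + ((1 - k₁ ^ 2 / (k₁ ^ 2 + k₂ ^ 2)) * P 0 0
        + (-(k₁ * k₂) / (k₁ ^ 2 + k₂ ^ 2)) * P 0 1
        + (-(k₂ * k₁) / (k₁ ^ 2 + k₂ ^ 2)) * P 1 0
        + (1 - k₂ ^ 2 / (k₁ ^ 2 + k₂ ^ 2)) * P 1 1) := by
  have hK : k₁ ^ 2 + k₂ ^ 2 ≠ 0 := by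
    rcases not_and_or.mp hk with h | h <;> positivity
  have hKC : ((k₁ : ℂ) ^ 2 + (k₂ : ℂ) ^ 2) ≠ 0 := by
    exact_mod_cast fun h => hK (by exact_mod_cast h)
  have hωC : (ω : ℂ) ≠ 0 := by exact_mod_cast hω
  set c : ℂ := (k₂ : ℂ) * a₁ - (k₁ : ℂ) * a₂ with hc_def
  have ha₁ : a₁ * ((k₁ : ℂ) ^ 2 + (k₂ : ℂ) ^ 2) = (k₂ : ℂ) * c := by
    rw [hc_def]; linear_combination (k₁ : ℂ) * e₄
  have ha₂ : a₂ * ((k₁ : ℂ) ^ 2 + (k₂ : ℂ) ^ 2) = -(k₁ : ℂ) * c := by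
    rw [hc_def]; linear_combination (k₂ : ℂ) * e₄
  have hc : c ≠ 0 := by
    intro h0
    apply hnz
    constructor
    · have := ha₁; rw [h0, mul_zero] at this
      exact (mul_eq_zero.mp this).resolve_right hKC
    · have := ha₂; rw [h0, mul_zero] at this
      exact (mul_eq_zero.mp this).resolve_right hKC
  have key : (ω : ℂ) ^ 2 * (c * ((ω : ℂ) ^ 2 * ((k₁ : ℂ) ^ 2 + (k₂ : ℂ) ^ 2)
      - ((f : ℂ) ^ 2 * (k₂ : ℂ) ^ 2 + (k₂ : ℂ) ^ 2 * (P 0 0 : ℝ)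
        - (k₁ : ℂ) * (k₂ : ℂ) * (P 0 1 : ℝ) - (k₂ : ℂ) * (k₁ : ℂ) * (P 1 0 : ℝ)
        + (k₁ : ℂ) ^ 2 * (P 1 1 : ℝ)))) = 0 := by
    linear_combination ((k₂ : ℂ) * (ω : ℂ) ^ 2 * ((k₁ : ℂ) ^ 2 + (k₂ : ℂ) ^ 2)) * e₁
      - ((k₁ : ℂ) * (ω : ℂ) ^ 2 * ((k₁ : ℂ) ^ 2 + (k₂ : ℂ) ^ 2)) * e₂
      + (I * (f : ℂ) * (ω : ℂ) * (k₂ : ℂ) * ((k₁ : ℂ) ^ 2 + (k₂ : ℂ) ^ 2)) * e₃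
      + ((ω : ℂ) ^ 2 * ((f : ℂ) ^ 2 * (k₂ : ℂ) + (k₂ : ℂ) * (P 0 0 : ℝ)
          - (k₁ : ℂ) * (P 1 0 : ℝ))) * ha₁
      + ((ω : ℂ) ^ 2 * ((k₂ : ℂ) * (P 0 1 : ℝ) - (k₁ : ℂ) * (P 1 1 : ℝ))) * ha₂
      - ((f : ℂ) ^ 2 * (ω : ℂ) ^ 2 * (k₂ : ℂ) * ((k₁ : ℂ) ^ 2 + (k₂ : ℂ) ^ 2) * a₁) * Complex.I_sq
  have hX : (ω : ℂ) ^ 2 * ((k₁ : ℂ) ^ 2 + (k₂ : ℂ) ^ 2)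
      = (f : ℂ) ^ 2 * (k₂ : ℂ) ^ 2 + (k₂ : ℂ) ^ 2 * (P 0 0 : ℝ)
        - (k₁ : ℂ) * (k₂ : ℂ) * (P 0 1 : ℝ) - (k₂ : ℂ) * (k₁ : ℂ) * (P 1 0 : ℝ)
        + (k₁ : ℂ) ^ 2 * (P 1 1 : ℝ) := by
    have h1 := mul_eq_zero.mp key
    rcases h1 with h | h
    · exact absurd h (pow_ne_zero 2 hωC)
    rcases mul_eq_zero.mp h with h | h
    · exact absurd h hc
    · exact sub_eq_zero.mp h
  have hR : ω ^ 2 * (k₁ ^ 2 + k₂ ^ 2)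
      = f ^ 2 * k₂ ^ 2 + k₂ ^ 2 * P 0 0 - k₁ * k₂ * P 0 1 - k₂ * k₁ * P 1 0
        + k₁ ^ 2 * P 1 1 := by exact_mod_cast hX
  field_simp
  linarith [hR, mul_comm (k₁ ^ 2 + k₂ ^ 2) (ω ^ 2)]
end

section
/- For the Euler-Boussinesq Eady system on a 2D domain $M$ with boundary conditions periodic in $x$ and no normal flow at top/bottom, the energy $E = \int_M \frac{D}{2}(|\mathbf{u}_S|^2 + u_T^2) - D\gamma(z)\vartheta_s\,d^2x$ with $D=1$ is conserved in time: $\frac{dE}{dt} = 0$ along solutions of $\partial_t\mathbf{u}_S + \mathbf{u}_S\cdot\nabla\mathbf{u}_S = fu_T\hat{x} + \frac{g}{\vartheta_0}\vartheta_s\hat{z} - \nabla p$, $\partial_t u_T + \mathbf{u}_S\cdot\nabla u_T = -f\mathbf{u}_S\cdot\hat{x} - \gamma(z)s$, $\partial_t\vartheta_s + \mathbf{u}_S\cdot\nabla\vartheta_s + s u_T = 0$, $\nabla\cdot\mathbf{u}_S = 0$, where $\gamma(z) = \frac{g}{\vartheta_0}(z - H/2)$. -/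
open MeasureTheory

/-- Partial derivative in the first (`x`) coordinate. -/
noncomputable def pdx (h : ℝ × ℝ → ℝ) (p : ℝ × ℝ) : ℝ :=
  deriv (fun x => h (x, p.2)) p.1

/-- Partial derivative in the second (`z`) coordinate. -/
noncomputable def pdz (h : ℝ × ℝ → ℝ) (p : ℝ × ℝ) : ℝ :=
  deriv (fun z => h (p.1, z)) p.2

noncomputable def Dv (v : ℝ × (ℝ × ℝ)) (F : ℝ × (ℝ × ℝ) → ℝ) (q : ℝ × (ℝ × ℝ)) : ℝ :=
  fderiv ℝ F q v

lemma Dv_add {A B : ℝ × (ℝ × ℝ) → ℝ} {q v} (hA : DifferentiableAt ℝ A q)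
    (hB : DifferentiableAt ℝ B q) :
    Dv v (fun q => A q + B q) q = Dv v A q + Dv v B q := by
  simp [Dv, fderiv_fun_add hA hB]

lemma Dv_sub {A B : ℝ × (ℝ × ℝ) → ℝ} {q v} (hA : DifferentiableAt ℝ A q)
    (hB : DifferentiableAt ℝ B q) :
    Dv v (fun q => A q - B q) q = Dv v A q - Dv v B q := by
  simp [Dv, fderiv_fun_sub hA hB]

lemma Dv_mul {A B : ℝ × (ℝ × ℝ) → ℝ} {q v} (hA : DifferentiableAt ℝ A q)
    (hB : DifferentiableAt ℝ B q) :
    Dv v (fun q => A q * B q) q = A q * Dv v B q + Dv v A q * B q := by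
  simp [Dv, fderiv_fun_mul hA hB]; ring

lemma Dv_const_mul {A : ℝ × (ℝ × ℝ) → ℝ} {q v} (c : ℝ) (hA : DifferentiableAt ℝ A q) :
    Dv v (fun q => c * A q) q = c * Dv v A q := by
  simp [Dv, fderiv_const_mul hA]

lemma Dv_const (c : ℝ) (v q) : Dv v (fun _ : ℝ × (ℝ × ℝ) => c) q = 0 := by
  simp [Dv]

lemma Dv_pow2 {A : ℝ × (ℝ × ℝ) → ℝ} {q v} (hA : DifferentiableAt ℝ A q) :
    Dv v (fun q => A q ^ 2) q = 2 * A q * Dv v A q := by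
  have : (fun q => A q ^ 2) = fun q => A q * A q := by funext q; ring
  rw [this, Dv_mul hA hA]; ring

lemma Dv_z (v : ℝ × (ℝ × ℝ)) (q : ℝ × (ℝ × ℝ)) :
    Dv v (fun q : ℝ × (ℝ × ℝ) => q.2.2) q = v.2.2 := by
  have : (fun q : ℝ × (ℝ × ℝ) => q.2.2)
      = fun q : ℝ × (ℝ × ℝ) => ((ContinuousLinearMap.snd ℝ ℝ ℝ).comp
        (ContinuousLinearMap.snd ℝ ℝ (ℝ × ℝ))) q := rfl
  rw [this, Dv, ContinuousLinearMap.fderiv]; rfl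

lemma Dv_continuous {F : ℝ × (ℝ × ℝ) → ℝ} (hF : ContDiff ℝ (⊤ : ℕ∞) F) (v) :
    Continuous (Dv v F) :=
  ((hF.fderiv_right (m := (⊤ : ℕ∞)) (by simp)).clm_apply contDiff_const).continuous

lemma hasDerivAt_t {F : ℝ × (ℝ × ℝ) → ℝ} (hF : ContDiff ℝ (⊤ : ℕ∞) F) (t : ℝ) (y : ℝ × ℝ) :
    HasDerivAt (fun τ => F (τ, y)) (Dv (1, (0, 0)) F (t, y)) t := by
  have hline : HasDerivAt (fun τ : ℝ => (τ, y)) ((1 : ℝ), ((0 : ℝ), (0 : ℝ))) t := by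
    exact (hasDerivAt_id t).prodMk (hasDerivAt_const t y)
  exact ((hF.differentiable (by simp) (t, y)).hasFDerivAt).comp_hasDerivAt t hline

lemma hasDerivAt_x {F : ℝ × (ℝ × ℝ) → ℝ} (hF : ContDiff ℝ (⊤ : ℕ∞) F) (t x z : ℝ) :
    HasDerivAt (fun x' => F (t, (x', z))) (Dv (0, (1, 0)) F (t, (x, z))) x := by
  have hline : HasDerivAt (fun x' : ℝ => ((t, (x', z)) : ℝ × (ℝ × ℝ)))
      ((0 : ℝ), ((1 : ℝ), (0 : ℝ))) x := by
    simpa using ((hasDerivAt_const x t).prodMk ((hasDerivAt_id x).prodMk (hasDerivAt_const x z)))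
  exact ((hF.differentiable (by simp) (t, (x, z))).hasFDerivAt).comp_hasDerivAt x hline

lemma hasDerivAt_z {F : ℝ × (ℝ × ℝ) → ℝ} (hF : ContDiff ℝ (⊤ : ℕ∞) F) (t x z : ℝ) :
    HasDerivAt (fun z' => F (t, (x, z'))) (Dv (0, (0, 1)) F (t, (x, z))) z := by
  have hline : HasDerivAt (fun z' : ℝ => ((t, (x, z')) : ℝ × (ℝ × ℝ)))
      ((0 : ℝ), ((0 : ℝ), (1 : ℝ))) z := by
    simpa using ((hasDerivAt_const z t).prodMk ((hasDerivAt_const z x).prodMk (hasDerivAt_id z)))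
  exact ((hF.differentiable (by simp) (t, (x, z))).hasFDerivAt).comp_hasDerivAt z hline

noncomputable def Ed (H g θ₀ : ℝ) (u₁ u₂ uT θ : ℝ → ℝ × ℝ → ℝ) : ℝ × (ℝ × ℝ) → ℝ :=
  fun q => (1 / 2) * ((u₁ q.1 q.2) ^ 2 + (u₂ q.1 q.2) ^ 2 + (uT q.1 q.2) ^ 2)
    - g / θ₀ * (q.2.2 - H / 2) * θ q.1 q.2

noncomputable def Gd (H g θ₀ : ℝ) (u₁ u₂ uT θ p : ℝ → ℝ × ℝ → ℝ) : ℝ × (ℝ × ℝ) → ℝ :=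
  fun q => Ed H g θ₀ u₁ u₂ uT θ q + p q.1 q.2

lemma Ed_contDiff {H g θ₀ : ℝ} {u₁ u₂ uT θ : ℝ → ℝ × ℝ → ℝ}
    (hu₁ : ContDiff ℝ (⊤ : ℕ∞) (fun q : ℝ × (ℝ × ℝ) => u₁ q.1 q.2))
    (hu₂ : ContDiff ℝ (⊤ : ℕ∞) (fun q : ℝ × (ℝ × ℝ) => u₂ q.1 q.2))
    (huT : ContDiff ℝ (⊤ : ℕ∞) (fun q : ℝ × (ℝ × ℝ) => uT q.1 q.2))
    (hθ : ContDiff ℝ (⊤ : ℕ∞) (fun q : ℝ × (ℝ × ℝ) => θ q.1 q.2)) :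
    ContDiff ℝ (⊤ : ℕ∞) (Ed H g θ₀ u₁ u₂ uT θ) := by
  unfold Ed
  exact (contDiff_const.mul (((hu₁.pow 2).add (hu₂.pow 2)).add (huT.pow 2))).sub
    (((contDiff_const.mul (contDiff_snd.snd.sub contDiff_const))).mul hθ)

lemma Gd_contDiff {H g θ₀ : ℝ} {u₁ u₂ uT θ p : ℝ → ℝ × ℝ → ℝ}
    (hu₁ : ContDiff ℝ (⊤ : ℕ∞) (fun q : ℝ × (ℝ × ℝ) => u₁ q.1 q.2))
    (hu₂ : ContDiff ℝ (⊤ : ℕ∞) (fun q : ℝ × (ℝ × ℝ) => u₂ q.1 q.2))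
    (huT : ContDiff ℝ (⊤ : ℕ∞) (fun q : ℝ × (ℝ × ℝ) => uT q.1 q.2))
    (hθ : ContDiff ℝ (⊤ : ℕ∞) (fun q : ℝ × (ℝ × ℝ) => θ q.1 q.2))
    (hp : ContDiff ℝ (⊤ : ℕ∞) (fun q : ℝ × (ℝ × ℝ) => p q.1 q.2)) :
    ContDiff ℝ (⊤ : ℕ∞) (Gd H g θ₀ u₁ u₂ uT θ p) :=
  (Ed_contDiff hu₁ hu₂ huT hθ).add hp

lemma Dv_Ed {H g θ₀ : ℝ} {u₁ u₂ uT θ : ℝ → ℝ × ℝ → ℝ}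
    (hu₁ : ContDiff ℝ (⊤ : ℕ∞) (fun q : ℝ × (ℝ × ℝ) => u₁ q.1 q.2))
    (hu₂ : ContDiff ℝ (⊤ : ℕ∞) (fun q : ℝ × (ℝ × ℝ) => u₂ q.1 q.2))
    (huT : ContDiff ℝ (⊤ : ℕ∞) (fun q : ℝ × (ℝ × ℝ) => uT q.1 q.2))
    (hθ : ContDiff ℝ (⊤ : ℕ∞) (fun q : ℝ × (ℝ × ℝ) => θ q.1 q.2))
    (v q) :
    Dv v (Ed H g θ₀ u₁ u₂ uT θ) q
      = u₁ q.1 q.2 * Dv v (fun q : ℝ × (ℝ × ℝ) => u₁ q.1 q.2) q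
        + u₂ q.1 q.2 * Dv v (fun q : ℝ × (ℝ × ℝ) => u₂ q.1 q.2) q
        + uT q.1 q.2 * Dv v (fun q : ℝ × (ℝ × ℝ) => uT q.1 q.2) q
        - g / θ₀ * v.2.2 * θ q.1 q.2
        - g / θ₀ * (q.2.2 - H / 2) * Dv v (fun q : ℝ × (ℝ × ℝ) => θ q.1 q.2) q := by
  have d1 := hu₁.differentiable (by simp)
  have d2 := hu₂.differentiable (by simp)
  have dT := huT.differentiable (by simp)
  have dθ := hθ.differentiable (by simp)
  have dz : Differentiable ℝ (fun q : ℝ × (ℝ × ℝ) => q.2.2 - H / 2) :=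
    differentiable_snd.snd.sub (differentiable_const _)
  have dγ : Differentiable ℝ (fun q : ℝ × (ℝ × ℝ) => g / θ₀ * (q.2.2 - H / 2)) :=
    (differentiable_const _).mul dz
  unfold Ed
  rw [Dv_sub ((differentiable_const _).fun_mul
        (((d1.fun_pow 2).fun_add (d2.fun_pow 2)).fun_add (dT.fun_pow 2)) q) ((dγ.fun_mul dθ) q),
    Dv_const_mul _ ((((d1.fun_pow 2).fun_add (d2.fun_pow 2)).fun_add (dT.fun_pow 2)) q),
    Dv_add (((d1.fun_pow 2).fun_add (d2.fun_pow 2)) q) ((dT.fun_pow 2) q),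
    Dv_add ((d1.fun_pow 2) q) ((d2.fun_pow 2) q),
    Dv_pow2 (d1 q), Dv_pow2 (d2 q), Dv_pow2 (dT q),
    Dv_mul (dγ q) (dθ q),
    Dv_const_mul _ (dz q),
    Dv_sub (differentiable_snd.snd q) (differentiable_const _ q),
    Dv_z, Dv_const]
  ring

lemma Dv_Gd {H g θ₀ : ℝ} {u₁ u₂ uT θ p : ℝ → ℝ × ℝ → ℝ}
    (hu₁ : ContDiff ℝ (⊤ : ℕ∞) (fun q : ℝ × (ℝ × ℝ) => u₁ q.1 q.2))
    (hu₂ : ContDiff ℝ (⊤ : ℕ∞) (fun q : ℝ × (ℝ × ℝ) => u₂ q.1 q.2))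
    (huT : ContDiff ℝ (⊤ : ℕ∞) (fun q : ℝ × (ℝ × ℝ) => uT q.1 q.2))
    (hθ : ContDiff ℝ (⊤ : ℕ∞) (fun q : ℝ × (ℝ × ℝ) => θ q.1 q.2))
    (hp : ContDiff ℝ (⊤ : ℕ∞) (fun q : ℝ × (ℝ × ℝ) => p q.1 q.2))
    (v q) :
    Dv v (Gd H g θ₀ u₁ u₂ uT θ p) q
      = Dv v (Ed H g θ₀ u₁ u₂ uT θ) q + Dv v (fun q : ℝ × (ℝ × ℝ) => p q.1 q.2) q := by
  unfold Gd
  exact Dv_add ((Ed_contDiff hu₁ hu₂ huT hθ).differentiable (by simp) q)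
    (hp.differentiable (by simp) q)

lemma key_identity (L H f g θ₀ s : ℝ) (u₁ u₂ uT θ p : ℝ → ℝ × ℝ → ℝ)
    (hu₁ : ContDiff ℝ (⊤ : ℕ∞) (fun q : ℝ × (ℝ × ℝ) => u₁ q.1 q.2))
    (hu₂ : ContDiff ℝ (⊤ : ℕ∞) (fun q : ℝ × (ℝ × ℝ) => u₂ q.1 q.2))
    (huT : ContDiff ℝ (⊤ : ℕ∞) (fun q : ℝ × (ℝ × ℝ) => uT q.1 q.2))
    (hθ : ContDiff ℝ (⊤ : ℕ∞) (fun q : ℝ × (ℝ × ℝ) => θ q.1 q.2))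
    (hp : ContDiff ℝ (⊤ : ℕ∞) (fun q : ℝ × (ℝ × ℝ) => p q.1 q.2))
    (hmom₁ : ∀ t q, deriv (fun τ => u₁ τ q) t
        + u₁ t q * pdx (u₁ t) q + u₂ t q * pdz (u₁ t) q
      = f * uT t q - pdx (p t) q)
    (hmom₂ : ∀ t q, deriv (fun τ => u₂ τ q) t
        + u₁ t q * pdx (u₂ t) q + u₂ t q * pdz (u₂ t) q
      = g / θ₀ * θ t q - pdz (p t) q)
    (hmomT : ∀ t q, deriv (fun τ => uT τ q) t
        + u₁ t q * pdx (uT t) q + u₂ t q * pdz (uT t) q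
      = -(f * u₁ t q) - g / θ₀ * (q.2 - H / 2) * s)
    (hθadv : ∀ t q, deriv (fun τ => θ τ q) t
        + u₁ t q * pdx (θ t) q + u₂ t q * pdz (θ t) q + s * uT t q = 0)
    (hdiv : ∀ t q, pdx (u₁ t) q + pdz (u₂ t) q = 0)
    (t x z : ℝ) :
    Dv (1, (0, 0)) (Ed H g θ₀ u₁ u₂ uT θ) (t, (x, z))
      = -(Dv (0, (1, 0)) (fun q : ℝ × (ℝ × ℝ) =>
            u₁ q.1 q.2 * Gd H g θ₀ u₁ u₂ uT θ p q) (t, (x, z))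
        + Dv (0, (0, 1)) (fun q : ℝ × (ℝ × ℝ) =>
            u₂ q.1 q.2 * Gd H g θ₀ u₁ u₂ uT θ p q) (t, (x, z))) := by
  have d1 := hu₁.differentiable (by simp)
  have d2 := hu₂.differentiable (by simp)
  have dG := (Gd_contDiff (H := H) (g := g) (θ₀ := θ₀) hu₁ hu₂ huT hθ hp).differentiable (by simp)
  -- translate the PDE hypotheses into `Dv` form
  have e1 : deriv (fun τ => u₁ τ (x, z)) t
      = Dv (1, (0, 0)) (fun q : ℝ × (ℝ × ℝ) => u₁ q.1 q.2) (t, (x, z)) :=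
    by simpa only [] using (hasDerivAt_t hu₁ t (x, z)).deriv
  have e2 : deriv (fun τ => u₂ τ (x, z)) t
      = Dv (1, (0, 0)) (fun q : ℝ × (ℝ × ℝ) => u₂ q.1 q.2) (t, (x, z)) :=
    by simpa only [] using (hasDerivAt_t hu₂ t (x, z)).deriv
  have e3 : deriv (fun τ => uT τ (x, z)) t
      = Dv (1, (0, 0)) (fun q : ℝ × (ℝ × ℝ) => uT q.1 q.2) (t, (x, z)) :=
    by simpa only [] using (hasDerivAt_t huT t (x, z)).deriv
  have e4 : deriv (fun τ => θ τ (x, z)) t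
      = Dv (1, (0, 0)) (fun q : ℝ × (ℝ × ℝ) => θ q.1 q.2) (t, (x, z)) :=
    by simpa only [] using (hasDerivAt_t hθ t (x, z)).deriv
  have px1 : pdx (u₁ t) (x, z)
      = Dv (0, (1, 0)) (fun q : ℝ × (ℝ × ℝ) => u₁ q.1 q.2) (t, (x, z)) :=
    by simpa only [pdx] using (hasDerivAt_x hu₁ t x z).deriv
  have px2 : pdx (u₂ t) (x, z)
      = Dv (0, (1, 0)) (fun q : ℝ × (ℝ × ℝ) => u₂ q.1 q.2) (t, (x, z)) :=
    by simpa only [pdx] using (hasDerivAt_x hu₂ t x z).deriv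
  have px3 : pdx (uT t) (x, z)
      = Dv (0, (1, 0)) (fun q : ℝ × (ℝ × ℝ) => uT q.1 q.2) (t, (x, z)) :=
    by simpa only [pdx] using (hasDerivAt_x huT t x z).deriv
  have px4 : pdx (θ t) (x, z)
      = Dv (0, (1, 0)) (fun q : ℝ × (ℝ × ℝ) => θ q.1 q.2) (t, (x, z)) :=
    by simpa only [pdx] using (hasDerivAt_x hθ t x z).deriv
  have px5 : pdx (p t) (x, z)
      = Dv (0, (1, 0)) (fun q : ℝ × (ℝ × ℝ) => p q.1 q.2) (t, (x, z)) :=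
    by simpa only [pdx] using (hasDerivAt_x hp t x z).deriv
  have pz1 : pdz (u₁ t) (x, z)
      = Dv (0, (0, 1)) (fun q : ℝ × (ℝ × ℝ) => u₁ q.1 q.2) (t, (x, z)) :=
    by simpa only [pdz] using (hasDerivAt_z hu₁ t x z).deriv
  have pz2 : pdz (u₂ t) (x, z)
      = Dv (0, (0, 1)) (fun q : ℝ × (ℝ × ℝ) => u₂ q.1 q.2) (t, (x, z)) :=
    by simpa only [pdz] using (hasDerivAt_z hu₂ t x z).deriv
  have pz3 : pdz (uT t) (x, z)
      = Dv (0, (0, 1)) (fun q : ℝ × (ℝ × ℝ) => uT q.1 q.2) (t, (x, z)) :=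
    by simpa only [pdz] using (hasDerivAt_z huT t x z).deriv
  have pz4 : pdz (θ t) (x, z)
      = Dv (0, (0, 1)) (fun q : ℝ × (ℝ × ℝ) => θ q.1 q.2) (t, (x, z)) :=
    by simpa only [pdz] using (hasDerivAt_z hθ t x z).deriv
  have pz5 : pdz (p t) (x, z)
      = Dv (0, (0, 1)) (fun q : ℝ × (ℝ × ℝ) => p q.1 q.2) (t, (x, z)) :=
    by simpa only [pdz] using (hasDerivAt_z hp t x z).deriv
  have h1 := hmom₁ t (x, z)
  have h2 := hmom₂ t (x, z)
  have h3 := hmomT t (x, z)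
  have h4 := hθadv t (x, z)
  have h5 := hdiv t (x, z)
  rw [e1, px1, pz1, px5] at h1
  rw [e2, px2, pz2, pz5] at h2
  rw [e3, px3, pz3] at h3
  rw [e4, px4, pz4] at h4
  rw [px1, pz2] at h5
  simp only [Prod.snd] at h3
  -- expand both sides
  rw [Dv_mul (d1 _) (dG _), Dv_mul (d2 _) (dG _),
    Dv_Gd hu₁ hu₂ huT hθ hp, Dv_Gd hu₁ hu₂ huT hθ hp,
    Dv_Ed hu₁ hu₂ huT hθ, Dv_Ed hu₁ hu₂ huT hθ, Dv_Ed hu₁ hu₂ huT hθ]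
  dsimp only
  linear_combination (u₁ t (x, z)) * h1 + (u₂ t (x, z)) * h2 + (uT t (x, z)) * h3
    - (g / θ₀ * (z - H / 2)) * h4 + (Gd H g θ₀ u₁ u₂ uT θ p (t, (x, z))) * h5

/-- Energy conservation for the Euler–Boussinesq Eady system on
`M = [-L,L] × [0,H]` (periodic in `x`, no normal flow at top and bottom):
along smooth solutions of
`∂ₜu_S + u_S·∇u_S = f u_T x̂ + (g/ϑ₀)ϑ_s ẑ - ∇p`,
`∂ₜu_T + u_S·∇u_T = -f u_S·x̂ - γ(z) s`,
`∂ₜϑ_s + u_S·∇ϑ_s + s u_T = 0`, `∇·u_S = 0`, with `γ(z) = (g/ϑ₀)(z - H/2)`,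
the energy `E = ∫_M ½(|u_S|² + u_T²) - γ(z)ϑ_s d²x` (with `D = 1`) satisfies
`dE/dt = 0`. -/
theorem eady_energy_conservation
    (L H f g θ₀ s : ℝ) (hL : 0 < L) (hH : 0 < H) (hθ₀ : θ₀ ≠ 0)
    (u₁ u₂ uT θ p : ℝ → ℝ × ℝ → ℝ)
    (hu₁ : ContDiff ℝ (⊤ : ℕ∞) (fun q : ℝ × (ℝ × ℝ) => u₁ q.1 q.2))
    (hu₂ : ContDiff ℝ (⊤ : ℕ∞) (fun q : ℝ × (ℝ × ℝ) => u₂ q.1 q.2))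
    (huT : ContDiff ℝ (⊤ : ℕ∞) (fun q : ℝ × (ℝ × ℝ) => uT q.1 q.2))
    (hθ : ContDiff ℝ (⊤ : ℕ∞) (fun q : ℝ × (ℝ × ℝ) => θ q.1 q.2))
    (hp : ContDiff ℝ (⊤ : ℕ∞) (fun q : ℝ × (ℝ × ℝ) => p q.1 q.2))
    -- periodicity in x with period 2L
    (hper : ∀ t x z,
      u₁ t (x + 2 * L, z) = u₁ t (x, z) ∧ u₂ t (x + 2 * L, z) = u₂ t (x, z) ∧
      uT t (x + 2 * L, z) = uT t (x, z) ∧ θ t (x + 2 * L, z) = θ t (x, z) ∧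
      p t (x + 2 * L, z) = p t (x, z))
    -- no normal flow at top and bottom
    (hbot : ∀ t x, u₂ t (x, 0) = 0) (htop : ∀ t x, u₂ t (x, H) = 0)
    -- the Euler–Boussinesq Eady equations
    (hmom₁ : ∀ t q, deriv (fun τ => u₁ τ q) t
        + u₁ t q * pdx (u₁ t) q + u₂ t q * pdz (u₁ t) q
      = f * uT t q - pdx (p t) q)
    (hmom₂ : ∀ t q, deriv (fun τ => u₂ τ q) t
        + u₁ t q * pdx (u₂ t) q + u₂ t q * pdz (u₂ t) q
      = g / θ₀ * θ t q - pdz (p t) q)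
    (hmomT : ∀ t q, deriv (fun τ => uT τ q) t
        + u₁ t q * pdx (uT t) q + u₂ t q * pdz (uT t) q
      = -(f * u₁ t q) - g / θ₀ * (q.2 - H / 2) * s)
    (hθadv : ∀ t q, deriv (fun τ => θ τ q) t
        + u₁ t q * pdx (θ t) q + u₂ t q * pdz (θ t) q + s * uT t q = 0)
    (hdiv : ∀ t q, pdx (u₁ t) q + pdz (u₂ t) q = 0) :
    ∀ t, deriv (fun τ => ∫ q in Set.Icc (-L) L ×ˢ Set.Icc (0:ℝ) H,
        ((1 / 2) * ((u₁ τ q) ^ 2 + (u₂ τ q) ^ 2 + (uT τ q) ^ 2)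
          - g / θ₀ * (q.2 - H / 2) * θ τ q)) t = 0 := by
  intro t₀
  have hScomp : IsCompact (Set.Icc (-L) L ×ˢ Set.Icc (0:ℝ) H) :=
    isCompact_Icc.prod isCompact_Icc
  have hSmeas : MeasurableSet (Set.Icc (-L) L ×ˢ Set.Icc (0:ℝ) H) :=
    measurableSet_Icc.prod measurableSet_Icc
  have hEd : ContDiff ℝ (⊤ : ℕ∞) (Ed H g θ₀ u₁ u₂ uT θ) := Ed_contDiff hu₁ hu₂ huT hθ
  have hGd : ContDiff ℝ (⊤ : ℕ∞) (Gd H g θ₀ u₁ u₂ uT θ p) := Gd_contDiff hu₁ hu₂ huT hθ hp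
  have hΦ₁ : ContDiff ℝ (⊤ : ℕ∞) (fun q : ℝ × (ℝ × ℝ) =>
      u₁ q.1 q.2 * Gd H g θ₀ u₁ u₂ uT θ p q) := hu₁.mul hGd
  have hΦ₂ : ContDiff ℝ (⊤ : ℕ∞) (fun q : ℝ × (ℝ × ℝ) =>
      u₂ q.1 q.2 * Gd H g θ₀ u₁ u₂ uT θ p q) := hu₂.mul hGd
  -- rewrite the integrand via `Ed`
  have hfun : (fun τ => ∫ q in Set.Icc (-L) L ×ˢ Set.Icc (0:ℝ) H,
        ((1 / 2) * ((u₁ τ q) ^ 2 + (u₂ τ q) ^ 2 + (uT τ q) ^ 2)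
          - g / θ₀ * (q.2 - H / 2) * θ τ q))
      = (fun τ => ∫ q in Set.Icc (-L) L ×ˢ Set.Icc (0:ℝ) H,
        Ed H g θ₀ u₁ u₂ uT θ (τ, q)) := rfl
  rw [hfun]
  -- Differentiation under the integral sign
  have hDtE_cont : Continuous (Dv (1, (0, 0)) (Ed H g θ₀ u₁ u₂ uT θ)) :=
    Dv_continuous hEd _
  obtain ⟨C, hC⟩ := (isCompact_Icc.prod hScomp).exists_bound_of_continuousOn
    (s := Set.Icc (t₀ - 1) (t₀ + 1) ×ˢ (Set.Icc (-L) L ×ˢ Set.Icc (0:ℝ) H))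
    hDtE_cont.continuousOn
  have main := hasDerivAt_integral_of_dominated_loc_of_deriv_le
    (μ := volume.restrict (Set.Icc (-L) L ×ˢ Set.Icc (0:ℝ) H))
    (F := fun τ q => Ed H g θ₀ u₁ u₂ uT θ (τ, q))
    (F' := fun τ q => Dv (1, (0, 0)) (Ed H g θ₀ u₁ u₂ uT θ) (τ, q))
    (x₀ := t₀) (bound := fun _ => C) (Metric.ball_mem_nhds t₀ one_pos)
    (Filter.Eventually.of_forall fun τ =>
      (hEd.continuous.comp (Continuous.prodMk_right τ)).aestronglyMeasurable)
    ((hEd.continuous.comp (Continuous.prodMk_right t₀)).continuousOn.integrableOn_compact hScomp)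
    ((hDtE_cont.comp (Continuous.prodMk_right t₀)).aestronglyMeasurable)
    (by
      filter_upwards [ae_restrict_mem hSmeas] with q hq τ hτ
      refine hC (τ, q) ⟨?_, hq⟩
      rw [Real.ball_eq_Ioo] at hτ
      exact Set.Ioo_subset_Icc_self hτ)
    (integrableOn_const hScomp.measure_lt_top.ne)
    (Filter.Eventually.of_forall fun q τ _ => hasDerivAt_t hEd τ q)
  rw [main.2.deriv]
  -- the space integral of the time derivative vanishes
  have hkey : ∀ q : ℝ × ℝ, Dv (1, (0, 0)) (Ed H g θ₀ u₁ u₂ uT θ) (t₀, q)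
      = -((fun q : ℝ × ℝ => Dv (0, (1, 0)) (fun q : ℝ × (ℝ × ℝ) =>
            u₁ q.1 q.2 * Gd H g θ₀ u₁ u₂ uT θ p q) (t₀, q)) q
        + (fun q : ℝ × ℝ => Dv (0, (0, 1)) (fun q : ℝ × (ℝ × ℝ) =>
            u₂ q.1 q.2 * Gd H g θ₀ u₁ u₂ uT θ p q) (t₀, q)) q) := by
    rintro ⟨x, z⟩
    exact key_identity L H f g θ₀ s u₁ u₂ uT θ p hu₁ hu₂ huT hθ hp
      hmom₁ hmom₂ hmomT hθadv hdiv t₀ x z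
  rw [integral_congr_ae (Filter.Eventually.of_forall hkey)]
  have cΦx : Continuous (fun q : ℝ × ℝ => Dv (0, (1, 0)) (fun q : ℝ × (ℝ × ℝ) =>
      u₁ q.1 q.2 * Gd H g θ₀ u₁ u₂ uT θ p q) (t₀, q)) :=
    (Dv_continuous hΦ₁ _).comp (Continuous.prodMk_right t₀)
  have cΦz : Continuous (fun q : ℝ × ℝ => Dv (0, (0, 1)) (fun q : ℝ × (ℝ × ℝ) =>
      u₂ q.1 q.2 * Gd H g θ₀ u₁ u₂ uT θ p q) (t₀, q)) :=
    (Dv_continuous hΦ₂ _).comp (Continuous.prodMk_right t₀)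
  rw [integral_neg, integral_add (cΦx.continuousOn.integrableOn_compact hScomp)
    (cΦz.continuousOn.integrableOn_compact hScomp)]
  -- the x-derivative term vanishes by periodicity
  have hxzero : (∫ q in Set.Icc (-L) L ×ˢ Set.Icc (0:ℝ) H,
      Dv (0, (1, 0)) (fun q : ℝ × (ℝ × ℝ) =>
        u₁ q.1 q.2 * Gd H g θ₀ u₁ u₂ uT θ p q) (t₀, q)) = 0 := by
    have hinner : ∀ z : ℝ, (∫ x in Set.Icc (-L) L,
        Dv (0, (1, 0)) (fun q : ℝ × (ℝ × ℝ) =>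
          u₁ q.1 q.2 * Gd H g θ₀ u₁ u₂ uT θ p q) (t₀, (x, z))) = 0 := by
      intro z
      rw [integral_Icc_eq_integral_Ioc,
        ← intervalIntegral.integral_of_le (by linarith : -(L:ℝ) ≤ L),
        intervalIntegral.integral_eq_sub_of_hasDerivAt
          (fun x _ => hasDerivAt_x hΦ₁ t₀ x z)
          (((Dv_continuous hΦ₁ _).comp
            (continuous_const.prodMk (continuous_id.prodMk continuous_const))
              : Continuous fun x : ℝ => Dv (0, (1, 0)) (fun q : ℝ × (ℝ × ℝ) =>
                  u₁ q.1 q.2 * Gd H g θ₀ u₁ u₂ uT θ p q) (t₀, (x, z))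
            ).intervalIntegrable _ _)]
      obtain ⟨q1, q2, q3, q4, q5⟩ := hper t₀ (-L) z
      rw [show -L + 2 * L = L by ring] at q1 q2 q3 q4 q5
      simp only [Ed, Gd]
      simp only [q1, q2, q3, q4, q5]
      ring
    have hint : IntegrableOn (fun q : ℝ × ℝ => Dv (0, (1, 0)) (fun q : ℝ × (ℝ × ℝ) =>
        u₁ q.1 q.2 * Gd H g θ₀ u₁ u₂ uT θ p q) (t₀, q))
        (Set.Icc (-L) L ×ˢ Set.Icc (0:ℝ) H)
        ((volume : Measure ℝ).prod (volume : Measure ℝ)) := by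
      rw [← Measure.volume_eq_prod]
      exact cΦx.continuousOn.integrableOn_compact hScomp
    have hint' : Integrable (fun q : ℝ × ℝ => Dv (0, (1, 0)) (fun q : ℝ × (ℝ × ℝ) =>
        u₁ q.1 q.2 * Gd H g θ₀ u₁ u₂ uT θ p q) (t₀, q))
        ((volume.restrict (Set.Icc (-L) L)).prod (volume.restrict (Set.Icc (0:ℝ) H))) := by
      rw [Measure.prod_restrict]
      exact hint
    calc (∫ q in Set.Icc (-L) L ×ˢ Set.Icc (0:ℝ) H,
          Dv (0, (1, 0)) (fun q : ℝ × (ℝ × ℝ) =>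
            u₁ q.1 q.2 * Gd H g θ₀ u₁ u₂ uT θ p q) (t₀, q))
        = ∫ q, (fun q : ℝ × ℝ => Dv (0, (1, 0)) (fun q : ℝ × (ℝ × ℝ) =>
            u₁ q.1 q.2 * Gd H g θ₀ u₁ u₂ uT θ p q) (t₀, q)) q
            ∂((volume.restrict (Set.Icc (-L) L)).prod
              (volume.restrict (Set.Icc (0:ℝ) H))) := by
          rw [Measure.prod_restrict, ← Measure.volume_eq_prod]
      _ = ∫ z in Set.Icc (0:ℝ) H, ∫ x in Set.Icc (-L) L,
            Dv (0, (1, 0)) (fun q : ℝ × (ℝ × ℝ) =>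
              u₁ q.1 q.2 * Gd H g θ₀ u₁ u₂ uT θ p q) (t₀, (x, z)) :=
          integral_prod_symm _ hint'
      _ = 0 := by simp [hinner]
  -- the z-derivative term vanishes by the boundary conditions
  have hzzero : (∫ q in Set.Icc (-L) L ×ˢ Set.Icc (0:ℝ) H,
      Dv (0, (0, 1)) (fun q : ℝ × (ℝ × ℝ) =>
        u₂ q.1 q.2 * Gd H g θ₀ u₁ u₂ uT θ p q) (t₀, q)) = 0 := by
    have hinner : ∀ x : ℝ, (∫ z in Set.Icc (0:ℝ) H,
        Dv (0, (0, 1)) (fun q : ℝ × (ℝ × ℝ) =>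
          u₂ q.1 q.2 * Gd H g θ₀ u₁ u₂ uT θ p q) (t₀, (x, z))) = 0 := by
      intro x
      rw [integral_Icc_eq_integral_Ioc,
        ← intervalIntegral.integral_of_le hH.le,
        intervalIntegral.integral_eq_sub_of_hasDerivAt
          (fun z _ => hasDerivAt_z hΦ₂ t₀ x z)
          (((Dv_continuous hΦ₂ _).comp
            (continuous_const.prodMk (continuous_const.prodMk continuous_id))
              : Continuous fun z : ℝ => Dv (0, (0, 1)) (fun q : ℝ × (ℝ × ℝ) =>
                  u₂ q.1 q.2 * Gd H g θ₀ u₁ u₂ uT θ p q) (t₀, (x, z))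
            ).intervalIntegrable _ _)]
      simp [htop t₀ x, hbot t₀ x]
    have hint : IntegrableOn (fun q : ℝ × ℝ => Dv (0, (0, 1)) (fun q : ℝ × (ℝ × ℝ) =>
        u₂ q.1 q.2 * Gd H g θ₀ u₁ u₂ uT θ p q) (t₀, q))
        (Set.Icc (-L) L ×ˢ Set.Icc (0:ℝ) H)
        ((volume : Measure ℝ).prod (volume : Measure ℝ)) := by
      rw [← Measure.volume_eq_prod]
      exact cΦz.continuousOn.integrableOn_compact hScomp
    calc (∫ q in Set.Icc (-L) L ×ˢ Set.Icc (0:ℝ) H,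
          Dv (0, (0, 1)) (fun q : ℝ × (ℝ × ℝ) =>
            u₂ q.1 q.2 * Gd H g θ₀ u₁ u₂ uT θ p q) (t₀, q))
        = ∫ q in Set.Icc (-L) L ×ˢ Set.Icc (0:ℝ) H,
            (fun q : ℝ × ℝ => Dv (0, (0, 1)) (fun q : ℝ × (ℝ × ℝ) =>
              u₂ q.1 q.2 * Gd H g θ₀ u₁ u₂ uT θ p q) (t₀, q)) q
            ∂((volume : Measure ℝ).prod (volume : Measure ℝ)) := by
          rw [← Measure.volume_eq_prod]
      _ = ∫ x in Set.Icc (-L) L, ∫ z in Set.Icc (0:ℝ) H,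
            Dv (0, (0, 1)) (fun q : ℝ × (ℝ × ℝ) =>
              u₂ q.1 q.2 * Gd H g θ₀ u₁ u₂ uT θ p q) (t₀, (x, z)) :=
          setIntegral_prod _ hint
      _ = 0 := by simp [hinner]
  rw [hxzero, hzzero]
  simp
end
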